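/- If two distinct points x, y of a metric space X can be connected by a rectifiable curve γ with image Γ, then there is a rectifiable arc (homeomorphic image of [0,1]) contained in Γ with endpoints x and y, of length at most ℓ(γ). -/

import Mathlib

/-!
Let `L = ℓ(γ)` and `Γ = γ '' [0,1]`. The `L`-Lipschitz curves in `Γ` from `x` to `y` form a
compact set for pointwise convergence (Tychonoff, and the Lipschitz condition is closed), on which
length is lower semicontinuous; it contains the constant-speed reparametrization of `γ`, so some
curve in it has least length. Reparametrize that curve at constant speed. If it passed twice
through a point, cutting out the loop in between and rescaling to `[0,1]` would give a curve of
the same kind with strictly smaller speed, hence shorter: so it is an arc.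
-/

open Set Metric
open scoped ENNReal

/-- A curve from `x` to `y` parameterized on `[0,1]`. -/
def IsCurveOn {X : Type*} [PseudoEMetricSpace X] (γ : ℝ → X) (x y : X) : Prop :=
  ContinuousOn γ (Set.Icc 0 1) ∧ γ 0 = x ∧ γ 1 = y

open Topology
open scoped NNReal

section ConstantSpeed

variable {E : Type*} [PseudoEMetricSpace E] {f g : ℝ → E} {s t : Set ℝ} {l : ℝ≥0}

theorem HasConstantSpeedOnWith.lipschitzOnWith (h : HasConstantSpeedOnWith f s l) :
    LipschitzOnWith l f s := by
  intro x hx y hy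
  wlog hxy : x ≤ y generalizing x y
  · rw [edist_comm, edist_comm x]
    exact this hy hx (le_of_not_ge hxy)
  calc edist (f x) (f y) ≤ eVariationOn f (s ∩ Icc x y) :=
        eVariationOn.edist_le f ⟨hx, le_rfl, hxy⟩ ⟨hy, hxy, le_rfl⟩
    _ = ENNReal.ofReal (l * (y - x)) := h hx hy
    _ = l * edist x y := by
        rw [edist_dist, Real.dist_eq, abs_sub_comm, abs_of_nonneg (sub_nonneg.2 hxy),
          ENNReal.ofReal_mul l.coe_nonneg, ENNReal.ofReal_coe_nnreal]

theorem HasConstantSpeedOnWith.eVariationOn_Icc_zero_one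
    (h : HasConstantSpeedOnWith f (Icc 0 1) l) : eVariationOn f (Icc 0 1) = l := by
  have := h (left_mem_Icc.2 zero_le_one) (right_mem_Icc.2 zero_le_one)
  rwa [inter_self, sub_zero, mul_one, ENNReal.ofReal_coe_nnreal] at this

theorem HasConstantSpeedOnWith.congr (h : HasConstantSpeedOnWith f s l) (hfg : EqOn f g s) :
    HasConstantSpeedOnWith g s l := fun x hx y hy => by
  rw [← eVariationOn.eq_of_eqOn (hfg.mono inter_subset_left)]
  exact h hx hy

theorem HasConstantSpeedOnWith.mono (h : HasConstantSpeedOnWith f s l) (hts : t ⊆ s)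
    [ht : t.OrdConnected] : HasConstantSpeedOnWith f t l := fun x hx y hy => by
  rw [inter_eq_right.2 (ht.out hx hy), ← inter_eq_right.2 ((ht.out hx hy).trans hts)]
  exact h (hts hx) (hts hy)

theorem HasConstantSpeedOnWith.comp_affine {φ : ℝ → ℝ} {c : ℝ≥0}
    (hφ : ∀ x ∈ s, ∀ y ∈ s, φ y - φ x = c * (y - x))
    (h : HasConstantSpeedOnWith f (φ '' s) l) :
    HasConstantSpeedOnWith (fun t => f (φ t)) s (c * l) := by
  have hmono : MonotoneOn φ s := fun x hx y hy hxy => by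
    linarith [hφ x hx y hy, mul_nonneg c.coe_nonneg (sub_nonneg.2 hxy)]
  intro x hx y hy
  rw [← Function.comp_def, eVariationOn.comp_inter_Icc_eq_of_monotoneOn f φ hmono hx hy,
    h (mem_image_of_mem φ hx) (mem_image_of_mem φ hy), hφ x hx y hy]
  congr 1
  push_cast
  ring

theorem image_mul_left_Icc_zero_one {T : ℝ} (hT : 0 < T) :
    (fun t => T * t) '' Icc 0 1 = Icc 0 T := by
  rw [image_mul_left_Icc' hT, mul_zero, mul_one]

theorem HasConstantSpeedOnWith.comp_const_mul {T : ℝ≥0} (hT : 0 < T)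
    (h : HasConstantSpeedOnWith f (Icc 0 (T : ℝ)) l) :
    HasConstantSpeedOnWith (fun t => f (T * t)) (Icc 0 1) (T * l) := by
  rw [← image_mul_left_Icc_zero_one (NNReal.coe_pos.2 hT)] at h
  exact h.comp_affine fun _ _ _ _ => by ring

theorem HasConstantSpeedOnWith.exists_excise {p q a b : ℝ}
    (h : HasConstantSpeedOnWith f (Icc p q) l) (hpa : p ≤ a) (hab : a ≤ b) (hbq : b ≤ q)
    (heq : f a = f b) :
    ∃ g : ℝ → E, HasConstantSpeedOnWith g (Icc p (q - (b - a))) l ∧ g p = f p ∧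
      g (q - (b - a)) = f q ∧ g '' Icc p (q - (b - a)) ⊆ f '' Icc p q := by
  set g : ℝ → E := fun t => if t ≤ a then f t else f (t + (b - a))
  have hleft : EqOn f g (Icc p a) := fun t ht => (if_pos ht.2).symm
  have hright : EqOn (f ∘ (· + (b - a))) g (Icc a (q - (b - a))) := by
    intro t ht
    rcases ht.1.eq_or_lt with rfl | hat
    · simp [g, heq]
    · simp [g, hat.not_ge]
  have hshift : (· + (b - a)) '' Icc a (q - (b - a)) = Icc b q := by
    rw [image_add_const_Icc]
    congr 1 <;> ring
  have hg_left : HasConstantSpeedOnWith g (Icc p a) l :=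
    (h.mono (Icc_subset_Icc_right (hab.trans hbq))).congr hleft
  have hg_right : HasConstantSpeedOnWith g (Icc a (q - (b - a))) l := by
    have hf_right : HasConstantSpeedOnWith f ((· + (b - a)) '' Icc a (q - (b - a))) l :=
      hshift ▸ h.mono (Icc_subset_Icc_left (hpa.trans hab))
    simpa using (hf_right.comp_affine (c := 1) (fun _ _ _ _ => by push_cast; ring)).congr hright
  refine ⟨g, hg_left.Icc_Icc hg_right, (hleft ⟨le_rfl, hpa⟩).symm, ?_, ?_⟩
  · rw [← hright ⟨by linarith, le_rfl⟩]
    simp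
  · rw [← Icc_union_Icc_eq_Icc hpa (by linarith), image_union, ← hleft.image_eq,
      ← hright.image_eq, image_comp, hshift]
    exact union_subset (image_mono (Icc_subset_Icc_right (hab.trans hbq)))
      (image_mono (Icc_subset_Icc_left (hpa.trans hab)))

end ConstantSpeed

theorem LocallyBoundedVariationOn.continuousWithinAt_variationOnFromTo {α : Type*}
    [LinearOrder α] [TopologicalSpace α] [OrderTopology α] {E : Type*} [PseudoMetricSpace E]
    {f : α → E} {s : Set α} (hf : LocallyBoundedVariationOn f s) {a b : α} (ha : a ∈ s)
    (hb : b ∈ s) (hfb : ContinuousWithinAt f s b) :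
    ContinuousWithinAt (variationOnFromTo f s a) s b := by
  have hleft := variationOnFromTo.tendsto_left ha hb hf (hfb.mono inter_subset_left)
  have hright := variationOnFromTo.tendsto_right ha hb hf (hfb.mono inter_subset_left)
  rw [dist_self, sub_zero] at hleft
  rw [dist_self, add_zero] at hright
  refine ((ContinuousWithinAt.union hleft hright).insert).mono fun t ht => ?_
  rcases lt_trichotomy t b with htb | rfl | hbt
  exacts [Or.inr (Or.inl ⟨ht, htb⟩), Or.inl rfl, Or.inr (Or.inr ⟨ht, hbt⟩)]

theorem eVariationOn.lowerSemicontinuous_pi {α : Type*} [LinearOrder α] {E : Type*}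
    [PseudoEMetricSpace E] (s : Set α) :
    LowerSemicontinuous fun f : α → E => eVariationOn f s :=
  fun f _ hv => eVariationOn.lowerSemicontinuous_aux (F := id) (p := 𝓝 f)
    (fun t _ => (continuous_apply t).tendsto f) hv

def IsConstantSpeedCurveIn {X : Type*} [PseudoEMetricSpace X] (f : ℝ → X) (x y : X) (S : Set X)
    (l : ℝ≥0) : Prop :=
  HasConstantSpeedOnWith f (Icc 0 1) l ∧ f 0 = x ∧ f 1 = y ∧ f '' Icc 0 1 ⊆ S

/-- Curves are extended to all of `ℝ` with values in `S`, so that this set lies in the product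
`Π t : ℝ, S`, which is compact for pointwise convergence by Tychonoff. -/
def lipschitzCurvesIn {X : Type*} [PseudoEMetricSpace X] (S : Set X) (L : ℝ≥0) (x y : X) :
    Set (ℝ → X) :=
  {g | (∀ t, g t ∈ S) ∧ LipschitzWith L g ∧ g 0 = x ∧ g 1 = y}

section Curves

variable {X : Type*} [PseudoEMetricSpace X] {f : ℝ → X} {x y : X} {S : Set X} {l L : ℝ≥0}

theorem IsConstantSpeedCurveIn.IccExtend_mem_lipschitzCurvesIn
    (hf : IsConstantSpeedCurveIn f x y S l) (hl : l ≤ L) :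
    IccExtend zero_le_one ((Icc 0 1).domRestrict f) ∈ lipschitzCurvesIn S L x y := by
  obtain ⟨hfl, rfl, rfl, hfS⟩ := hf
  refine ⟨fun t => hfS ?_, ?_, ?_, ?_⟩
  · rw [← range_domRestrict, ← IccExtend_range zero_le_one]
    exact mem_range_self t
  · exact (hfl.lipschitzOnWith.to_restrict.comp (LipschitzWith.projIcc zero_le_one)).weaken
      (by simpa using hl)
  · exact IccExtend_of_mem _ _ (left_mem_Icc.2 zero_le_one)
  · exact IccExtend_of_mem _ _ (right_mem_Icc.2 zero_le_one)

theorem IsConstantSpeedCurveIn.eVariationOn_IccExtend (hf : IsConstantSpeedCurveIn f x y S l) :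
    eVariationOn (IccExtend zero_le_one ((Icc 0 1).domRestrict f)) (Icc 0 1) = l := by
  rw [eVariationOn.eq_of_eqOn fun t ht => IccExtend_of_mem zero_le_one _ ht]
  exact hf.1.eVariationOn_Icc_zero_one

end Curves

section CurvesEMetric

variable {X : Type*} [EMetricSpace X] {f : ℝ → X} {x y : X} {S : Set X} {l : ℝ≥0}

theorem isCompact_lipschitzCurvesIn (hS : IsCompact S) (L : ℝ≥0) (x y : X) :
    IsCompact (lipschitzCurvesIn S L x y) := by
  refine (isCompact_univ_pi fun _ => hS).of_isClosed_subset ?_ fun g hg => mem_univ_pi.2 hg.1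
  have hmem : IsClosed {g : ℝ → X | ∀ t, g t ∈ S} := by
    simp only [ofPred_forall]
    exact isClosed_iInter fun t => hS.isClosed.preimage (continuous_apply t)
  exact hmem.inter ((isClosed_setOfPred_lipschitzWith L).inter
    ((isClosed_eq (continuous_apply 0) continuous_const).inter
      (isClosed_eq (continuous_apply 1) continuous_const)))

theorem IsConstantSpeedCurveIn.exists_shorter (hf : IsConstantSpeedCurveIn f x y S l)
    (hxy : x ≠ y) (hinj : ¬InjOn f (Icc 0 1)) :
    ∃ l' < l, ∃ g, IsConstantSpeedCurveIn g x y S l' := by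
  obtain ⟨hfl, rfl, rfl, hfS⟩ := hf
  obtain ⟨a, ha, b, hb, heq, hab⟩ :
      ∃ a ∈ Icc (0 : ℝ) 1, ∃ b ∈ Icc (0 : ℝ) 1, f a = f b ∧ a < b := by
    simp only [InjOn, not_forall] at hinj
    obtain ⟨a, ha, b, hb, heq, hne⟩ := hinj
    rcases lt_or_gt_of_ne hne with h | h
    exacts [⟨a, ha, b, hb, heq, h⟩, ⟨b, hb, a, ha, heq.symm, h⟩]
  have hlen : b - a < 1 := by
    refine lt_of_le_of_ne (by linarith [ha.1, hb.2]) fun h1 => hxy ?_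
    rwa [show a = 0 by linarith [ha.1, hb.2], show b = 1 by linarith [ha.1, hb.2]] at heq
  have hl : 0 < l := by
    refine pos_iff_ne_zero.2 fun hl0 => hxy (edist_eq_zero.1 ?_)
    exact (hasConstantSpeedOnWith_zero_iff.1 (hl0 ▸ hfl)) 0 (left_mem_Icc.2 zero_le_one) 1
      (right_mem_Icc.2 zero_le_one)
  set T : ℝ≥0 := ⟨1 - (b - a), by linarith⟩
  have hT : 0 < T := by rw [← NNReal.coe_pos]; show 0 < 1 - (b - a); linarith
  have hT1 : T < 1 := by rw [← NNReal.coe_lt_one]; show 1 - (b - a) < 1; linarith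
  obtain ⟨g, hgl, hg0, hg1, hgS⟩ := hfl.exists_excise ha.1 hab.le hb.2 heq
  refine ⟨T * l, mul_lt_of_lt_one_left hl hT1, fun t => g (T * t), hgl.comp_const_mul hT,
    by simp only [mul_zero, hg0], by simp only [mul_one]; exact hg1, ?_⟩
  rw [← image_image g (fun t => (T : ℝ) * t),
    image_mul_left_Icc_zero_one (NNReal.coe_pos.2 hT)]
  exact hgS.trans hfS

end CurvesEMetric

section Reparametrization

variable {X : Type*} [MetricSpace X]

theorem exists_isConstantSpeedCurveIn_image {f : ℝ → X} (hf : ContinuousOn f (Icc 0 1))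
    (hbv : BoundedVariationOn f (Icc 0 1)) :
    ∃ g, IsConstantSpeedCurveIn g (f 0) (f 1) (f '' Icc 0 1)
      (eVariationOn f (Icc 0 1)).toNNReal := by
  set M := (eVariationOn f (Icc (0 : ℝ) 1)).toNNReal
  have h0 : (0 : ℝ) ∈ Icc (0 : ℝ) 1 := left_mem_Icc.2 zero_le_one
  rcases eq_zero_or_pos M with hM | hM
  · refine ⟨f, ?_, rfl, rfl, subset_rfl⟩
    have hvar : eVariationOn f (Icc 0 1) = 0 :=
      ((ENNReal.toNNReal_eq_zero_iff _).1 hM).resolve_right hbv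
    rw [hM, hasConstantSpeedOnWith_zero_iff]
    exact (eVariationOn.eq_zero_iff f).1 hvar
  have hlbv := hbv.locallyBoundedVariationOn
  set v := variationOnFromTo f (Icc 0 1) 0
  have hv0 : v 0 = 0 := variationOnFromTo.self f _ 0
  have hv1 : v 1 = M := by
    simp only [v, variationOnFromTo.eq_of_le f _ zero_le_one, inter_self]
    rfl
  have hv : v '' Icc 0 1 = Icc 0 (M : ℝ) := by
    have hvc : ContinuousOn v (Icc 0 1) := fun t ht =>
      hlbv.continuousWithinAt_variationOnFromTo h0 ht (hf t ht)
    rw [hvc.image_Icc_of_monotoneOn zero_le_one (variationOnFromTo.monotoneOn hlbv h0),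
      hv0, hv1]
  set δ := naturalParameterization f (Icc 0 1) 0
  have hδ : HasConstantSpeedOnWith δ (Icc 0 (M : ℝ)) 1 :=
    hv ▸ has_unit_speed_naturalParameterization f hlbv h0
  have hδv : ∀ t ∈ Icc (0 : ℝ) 1, δ (v t) = f t := fun t ht =>
    edist_eq_zero.1 (edist_naturalParameterization_eq_zero hlbv h0 ht)
  refine ⟨fun t => δ (M * t), by simpa using hδ.comp_const_mul hM, ?_, ?_, ?_⟩
  · simpa [hv0] using hδv 0 h0
  · simpa [hv1] using hδv 1 (right_mem_Icc.2 zero_le_one)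
  · rw [← image_image δ (fun t => (M : ℝ) * t),
      image_mul_left_Icc_zero_one (NNReal.coe_pos.2 hM), ← hv, image_image]
    exact (image_congr hδv).subset

end Reparametrization

theorem IsConstantSpeedCurveIn.exists_minimal {X : Type*} [MetricSpace X] {f : ℝ → X}
    {x y : X} {S : Set X} {L : ℝ≥0} (hS : IsCompact S) (hf : IsConstantSpeedCurveIn f x y S L) :
    ∃ l ≤ L, ∃ α, IsConstantSpeedCurveIn α x y S l ∧
      ∀ l' < l, ∀ β, ¬IsConstantSpeedCurveIn β x y S l' := by
  obtain ⟨g, ⟨hgS, hgL, rfl, rfl⟩, hgmin⟩ :=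
    (eVariationOn.lowerSemicontinuous_pi (Icc 0 1)).lowerSemicontinuousOn _ |>.exists_isMinOn
      ⟨_, hf.IccExtend_mem_lipschitzCurvesIn le_rfl⟩ (isCompact_lipschitzCurvesIn hS L x y)
  have hvar_le {β : ℝ → X} {l' : ℝ≥0} (hβ : IsConstantSpeedCurveIn β (g 0) (g 1) S l')
      (hl' : l' ≤ L) : eVariationOn g (Icc 0 1) ≤ l' :=
    (hgmin (hβ.IccExtend_mem_lipschitzCurvesIn hl')).trans_eq hβ.eVariationOn_IccExtend
  have hgL' : eVariationOn g (Icc 0 1) ≤ L := hvar_le hf le_rfl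
  have hgfin : eVariationOn g (Icc 0 1) ≠ ⊤ :=
    ne_top_of_le_ne_top ENNReal.coe_ne_top hgL'
  have hm : (eVariationOn g (Icc 0 1)).toNNReal ≤ L := by
    rwa [← ENNReal.coe_le_coe, ENNReal.coe_toNNReal hgfin]
  obtain ⟨α, hαl, hα0, hα1, hαS⟩ :=
    exists_isConstantSpeedCurveIn_image hgL.continuous.continuousOn hgfin
  refine ⟨_, hm, α, ⟨hαl, hα0, hα1, hαS.trans (image_subset_iff.2 fun t _ => hgS t)⟩,
    fun l' hl' β hβ => (hvar_le hβ (hl'.le.trans hm)).not_gt ?_⟩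
  rwa [← ENNReal.coe_toNNReal hgfin, ENNReal.coe_lt_coe]

/-- If distinct points `x, y` are connected by a rectifiable curve `γ` with image `Γ`,
then there is a rectifiable arc (injective curve) inside `Γ` with endpoints `x` and `y`,
of length at most `ℓ(γ)`. -/
theorem exists_arc_in_curve_image {X : Type*} [MetricSpace X] (x y : X) (hxy : x ≠ y)
    (γ : ℝ → X) (h : IsCurveOn γ x y) (hrect : eVariationOn γ (Set.Icc 0 1) ≠ ⊤) :
    ∃ α : ℝ → X, IsCurveOn α x y ∧ Set.InjOn α (Set.Icc 0 1) ∧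
      α '' Set.Icc 0 1 ⊆ γ '' Set.Icc 0 1 ∧
      eVariationOn α (Set.Icc 0 1) ≤ eVariationOn γ (Set.Icc 0 1) := by
  obtain ⟨hγ, rfl, rfl⟩ := h
  obtain ⟨g, hg⟩ := exists_isConstantSpeedCurveIn_image hγ hrect
  obtain ⟨l, hl, α, hα, hmin⟩ := hg.exists_minimal (isCompact_Icc.image_of_continuousOn hγ)
  have hinj : InjOn α (Icc 0 1) := by
    by_contra hinj
    obtain ⟨l', hl', β, hβ⟩ := hα.exists_shorter hxy hinj
    exact hmin l' hl' β hβ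
  obtain ⟨hαl, hα0, hα1, hαS⟩ := hα
  refine ⟨α, ⟨hαl.lipschitzOnWith.continuousOn, hα0, hα1⟩, hinj, hαS, ?_⟩
  rw [hαl.eVariationOn_Icc_zero_one, ← ENNReal.coe_toNNReal hrect, ENNReal.coe_le_coe]
  exact hl
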